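/- Let S₁ be the one-dimensional Λ₁-module k with α = δ = 0. Then Ext¹ of S₁ with itself, computed in the category of Λ₁-modules, is a two-dimensional k-vector space. -/
import Mathlib


/-! Common framework: modules over the generalized Brauer star algebra with one
edge, `Λ₁ = k⟨α,δ⟩/(αδ, δα, α² − δ²)`, encoded as a module `V` together with two
endomorphisms `A` (the action of `α`) and `D` (the action of `δ`). -/

namespace GBTAone

structure Mod1 (R : Type) [CommRing R] : Type 1 where
  V : Type
  [instAdd : AddCommGroup V]
  [instMod : Module R V]
  A : Module.End R V
  D : Module.End R V

attribute [instance] Mod1.instAdd Mod1.instMod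

variable {R : Type} [CommRing R]

/-- The defining relations of `Λ₁`: `αδ = δα = 0` and `α² = δ²`. -/
def Satisfies1 (ρ : Mod1 R) : Prop :=
  ρ.A * ρ.D = 0 ∧ ρ.D * ρ.A = 0 ∧ ρ.A * ρ.A = ρ.D * ρ.D

/-- The space of `Λ₁`-module homomorphisms `ρ → σ`. -/
def homSet1 (ρ σ : Mod1 R) : Submodule R (ρ.V →ₗ[R] σ.V) where
  carrier := {f | f ∘ₗ ρ.A = σ.A ∘ₗ f ∧ f ∘ₗ ρ.D = σ.D ∘ₗ f}
  add_mem' := by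
    rintro f g ⟨hfa, hfd⟩ ⟨hga, hgd⟩
    exact ⟨by simp only [LinearMap.add_comp, LinearMap.comp_add, hfa, hga],
      by simp only [LinearMap.add_comp, LinearMap.comp_add, hfd, hgd]⟩
  zero_mem' := ⟨by simp, by simp⟩
  smul_mem' := by
    rintro c f ⟨hfa, hfd⟩
    exact ⟨by simp only [LinearMap.smul_comp, LinearMap.comp_smul, hfa],
      by simp only [LinearMap.smul_comp, LinearMap.comp_smul, hfd]⟩

/-- Projectivity of a `Λ₁`-module, via the lifting property in the category of
`Λ₁`-modules. -/
def IsProjective1 (P : Mod1 R) : Prop :=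
  Satisfies1 P ∧
  ∀ (A B : Mod1 R), Satisfies1 A → Satisfies1 B →
    ∀ p ∈ homSet1 A B, Function.Surjective p →
      ∀ g ∈ homSet1 P B, ∃ h ∈ homSet1 P A, p ∘ₗ h = g

/-- An endomorphism `f` of `ρ` factors through a projective `Λ₁`-module. -/
def FactorsThroughProjective1 (ρ : Mod1 R) (f : ρ.V →ₗ[R] ρ.V) : Prop :=
  ∃ P : Mod1 R, IsProjective1 P ∧ ∃ g ∈ homSet1 ρ P, ∃ h ∈ homSet1 P ρ, f = h ∘ₗ g

/-- "The stable endomorphism ring of `ρ` is isomorphic to the scalars". -/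
def StableEndIsoScalars1 (ρ : Mod1 R) : Prop :=
  (¬ FactorsThroughProjective1 ρ LinearMap.id) ∧
  ∀ f ∈ homSet1 ρ ρ, ∃ c : R, FactorsThroughProjective1 ρ (f - c • LinearMap.id)

/-- The linear map on `Fin m → W` sending the `src` coordinate to the `dst`
coordinate through `g`, and killing all other coordinates. -/
def mk1 {m : ℕ} {W : Type} [AddCommGroup W] [Module R W] (src dst : Fin m)
    (g : W →ₗ[R] W) : (Fin m → W) →ₗ[R] (Fin m → W) where
  toFun x := fun r => if r = dst then g (x src) else 0
  map_add' x y := by funext r; by_cases h : r = dst <;> simp [h]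
  map_smul' c x := by funext r; by_cases h : r = dst <;> simp [h]

/-- The map `(x, y) ↦ (0, x)` on `W × W`. -/
def sh (R W : Type) [CommRing R] [AddCommGroup W] [Module R W] :
    (W × W) →ₗ[R] (W × W) :=
  LinearMap.prod 0 (LinearMap.fst R W W)

/-- The module `M(α)`: `k²` with `α(x,y) = (0,x)` and `δ = 0`. -/
@[reducible] def Malpha (k : Type) [CommRing k] : Mod1 k where
  V := k × k
  A := sh k k
  D := 0

/-- The module `M(δ)`: `k²` with `δ(x,y) = (0,x)` and `α = 0`. -/
@[reducible] def Mdelta (k : Type) [CommRing k] : Mod1 k where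
  V := k × k
  A := 0
  D := sh k k

/-- The regular module `Λ₁`, with basis `1, α, δ, α²` (coordinates `0,1,2,3`). -/
@[reducible] def reg (k : Type) [CommRing k] : Mod1 k where
  V := Fin 4 → k
  A := mk1 0 1 LinearMap.id + mk1 1 3 LinearMap.id
  D := mk1 0 2 LinearMap.id + mk1 2 3 LinearMap.id

/-- The simple `Λ₁`-module `S₁`. -/
@[reducible] def S1 (k : Type) [CommRing k] : Mod1 k where
  V := k
  A := 0
  D := 0


/-- Block upper triangular endomorphism `(x, y) ↦ (f x + θ y, f y)` of `V × V`. -/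
def blk {V : Type} [AddCommGroup V] [Module R V] (f th : Module.End R V) :
    Module.End R (V × V) where
  toFun p := (f p.1 + th p.2, f p.2)
  map_add' p q := by
    simp only [Prod.fst_add, Prod.snd_add, map_add, Prod.mk_add_mk, Prod.mk.injEq, and_true]
    abel
  map_smul' c p := by
    simp only [Prod.smul_fst, Prod.smul_snd, map_smul, Prod.smul_mk, Prod.mk.injEq,
      smul_add, RingHom.id_apply, and_self]

/-- The self-extension of `ρ` determined by the cochain `θ = (θ_α, θ_δ)`. -/
@[reducible] def ext1 (ρ : Mod1 R) (th : Module.End R ρ.V × Module.End R ρ.V) :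
    Mod1 R where
  V := ρ.V × ρ.V
  A := blk ρ.A th.1
  D := blk ρ.D th.2

/-- `θ` is a cocycle precisely when the corresponding extension is a `Λ₁`-module. -/
def IsCocycle1 (ρ : Mod1 R) (th : Module.End R ρ.V × Module.End R ρ.V) : Prop :=
  Satisfies1 (ext1 ρ th)

/-- The coboundary of `φ`; extensions differing by a coboundary are equivalent. -/
def bnd1 (ρ : Mod1 R) (phi : Module.End R ρ.V) :
    Module.End R ρ.V × Module.End R ρ.V :=
  (ρ.A * phi - phi * ρ.A, ρ.D * phi - phi * ρ.D)


/-- `Ext¹_{Λ₁}(S₁, S₁)`, i.e. the space of self-extensions of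
`S₁` modulo equivalence (equivalently cocycles modulo coboundaries), is a
two-dimensional `k`-vector space. -/
theorem ext_S1_two_dimensional (k : Type) [Field k] :
    ∃ th1 th2 : Module.End k (S1 k).V × Module.End k (S1 k).V,
      IsCocycle1 (S1 k) th1 ∧ IsCocycle1 (S1 k) th2 ∧
      (∀ (c₁ c₂ : k) (phi : Module.End k (S1 k).V),
        c₁ • th1 + c₂ • th2 = bnd1 (S1 k) phi → c₁ = 0 ∧ c₂ = 0) ∧
      (∀ th, IsCocycle1 (S1 k) th →
        ∃ (c₁ c₂ : k) (phi : Module.End k (S1 k).V),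
          th = c₁ • th1 + c₂ • th2 + bnd1 (S1 k) phi) := by
  have hcoc : ∀ th : Module.End k (S1 k).V × Module.End k (S1 k).V,
      IsCocycle1 (S1 k) th := by
    intro th
    refine ⟨?_, ?_, ?_⟩ <;>
      · ext <;> simp [blk, Module.End.mul_apply]
  have hbnd : ∀ phi : Module.End k (S1 k).V, bnd1 (S1 k) phi = 0 := by
    intro phi
    simp [bnd1]
  refine ⟨(LinearMap.id, 0), (0, LinearMap.id), hcoc _, hcoc _, ?_, ?_⟩
  · intro c₁ c₂ phi h
    rw [hbnd] at h
    have h1 := congrArg (fun p => p.1 (1 : k)) h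
    have h2 := congrArg (fun p => p.2 (1 : k)) h
    simp at h1 h2
    exact ⟨h1, h2⟩
  · intro th _
    refine ⟨th.1 1, th.2 1, 0, ?_⟩
    rw [hbnd]
    refine Prod.ext ?_ ?_ <;>
    · ext
      simp [smul_eq_mul, mul_comm]


end GBTAone
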